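/- arXiv:1710.03530 — 4 statements merged into one kernel-verified Lean document; each statement's English description precedes it below -/
import Mathlib

section
/- For matrices A of size m×n and B of size p×q, with t = lcm(n,p), the semi-tensor product A⋉B := (A⊗I_{t/n})(B⊗I_{t/p}) is associative: (A⋉B)⋉C = A⋉(B⋉C) for all matrices A, B, C. -/
open Matrix Kronecker

noncomputable section

/-- `A ⊗ I_s`, reindexed to `Fin (m*s) × Fin (n*s)` index types. -/
def mkron {m n : ℕ} (A : Matrix (Fin m) (Fin n) ℝ) (s : ℕ) :
    Matrix (Fin (m * s)) (Fin (n * s)) ℝ :=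
  Matrix.reindex finProdFinEquiv finProdFinEquiv
    (Matrix.kroneckerMap (· * ·) A (1 : Matrix (Fin s) (Fin s) ℝ))

/-- `x ⊗ 1_s`: each entry of `x` repeated `s` times (Kronecker with the all-ones vector). -/
def vkron {r : ℕ} (x : Fin r → ℝ) (s : ℕ) : Fin (r * s) → ℝ :=
  fun i => x (finProdFinEquiv.symm i).1

/-- The semi-tensor (M-) product `A ⋉ B = (A ⊗ I_{t/n})(B ⊗ I_{t/p})`, `t = lcm n p`. -/
def stp {m n p q : ℕ} (A : Matrix (Fin m) (Fin n) ℝ) (B : Matrix (Fin p) (Fin q) ℝ) :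
    Matrix (Fin (m * (Nat.lcm n p / n))) (Fin (q * (Nat.lcm n p / p))) ℝ :=
  mkron A (Nat.lcm n p / n) *
    (mkron B (Nat.lcm n p / p)).submatrix
      (Fin.cast (by
        rw [Nat.mul_div_cancel' (Nat.dvd_lcm_left n p),
          Nat.mul_div_cancel' (Nat.dvd_lcm_right n p)])) id

/-- The vector (V-) product `A ⋉_V x = (A ⊗ I_{t/n})(x ⊗ 1_{t/r})`, `t = lcm n r`. -/
def vprod {m n r : ℕ} (A : Matrix (Fin m) (Fin n) ℝ) (x : Fin r → ℝ) :
    Fin (m * (Nat.lcm n r / n)) → ℝ :=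
  (mkron A (Nat.lcm n r / n)).mulVec fun j =>
    vkron x (Nat.lcm n r / r)
      (Fin.cast (by
        rw [Nat.mul_div_cancel' (Nat.dvd_lcm_left n r),
          Nat.mul_div_cancel' (Nat.dvd_lcm_right n r)]) j)

/-- V-addition `x ⊞ y = (x ⊗ 1_{t/m}) + (y ⊗ 1_{t/n})`, `t = lcm m n`. -/
def vadd2 {m n : ℕ} (x : Fin m → ℝ) (y : Fin n → ℝ) : Fin (Nat.lcm m n) → ℝ :=
  fun i =>
    vkron x (Nat.lcm m n / m) (Fin.cast (Nat.mul_div_cancel' (Nat.dvd_lcm_left m n)).symm i) +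
    vkron y (Nat.lcm m n / n) (Fin.cast (Nat.mul_div_cancel' (Nat.dvd_lcm_right m n)).symm i)

/-- V-subtraction `x ⊟ y = (x ⊗ 1_{t/m}) - (y ⊗ 1_{t/n})`, `t = lcm m n`. -/
def vsub2 {m n : ℕ} (x : Fin m → ℝ) (y : Fin n → ℝ) : Fin (Nat.lcm m n) → ℝ :=
  fun i =>
    vkron x (Nat.lcm m n / m) (Fin.cast (Nat.mul_div_cancel' (Nat.dvd_lcm_left m n)).symm i) -
    vkron y (Nat.lcm m n / n) (Fin.cast (Nat.mul_div_cancel' (Nat.dvd_lcm_right m n)).symm i)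

/-- The dimension-normalized norm `‖x‖_V = sqrt((1/k) ∑ xᵢ²)`. -/
def vnorm {k : ℕ} (x : Fin k → ℝ) : ℝ :=
  Real.sqrt ((∑ i, x i ^ 2) / k)

/-- The dimension-free inner product `⟨x,y⟩_V = (1/t)⟨x⊗1_{t/m}, y⊗1_{t/n}⟩`. -/
def vinner {m n : ℕ} (x : Fin m → ℝ) (y : Fin n → ℝ) : ℝ :=
  (∑ i : Fin (Nat.lcm m n),
      vkron x (Nat.lcm m n / m) (Fin.cast (Nat.mul_div_cancel' (Nat.dvd_lcm_left m n)).symm i) *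
      vkron y (Nat.lcm m n / n)
        (Fin.cast (Nat.mul_div_cancel' (Nat.dvd_lcm_right m n)).symm i)) /
    (Nat.lcm m n)

/-- The dimension-free distance `d(x,y) = ‖x ⊟ y‖_V`. -/
def vdist {m n : ℕ} (x : Fin m → ℝ) (y : Fin n → ℝ) : ℝ := vnorm (vsub2 x y)

/-- The spectral norm `‖A‖ = sqrt(σ_max(AᵀA))` (largest eigenvalue of `AᵀA = AᴴA` over `ℝ`). -/
def specNorm {m n : ℕ} (A : Matrix (Fin m) (Fin n) ℝ) : ℝ :=
  Real.sqrt (⨆ i, (Matrix.isHermitian_conjTranspose_mul_self A).eigenvalues i)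

/-- Vector equivalence: `x ↔ y` iff `x ⊗ 1_α = y ⊗ 1_β` for some `α, β ≥ 1`. -/
def VEquiv {m n : ℕ} (x : Fin m → ℝ) (y : Fin n → ℝ) : Prop :=
  ∃ (α β : ℕ), 0 < α ∧ 0 < β ∧
    ∃ h : m * α = n * β, ∀ i, vkron x α i = vkron y β (Fin.cast h i)

/-- Matrix equivalence: `A ∼ B` iff `A ⊗ I_α = B ⊗ I_β` for some `α, β ≥ 1`. -/
def MEquiv {m n p q : ℕ} (A : Matrix (Fin m) (Fin n) ℝ) (B : Matrix (Fin p) (Fin q) ℝ) : Prop :=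
  ∃ (α β : ℕ), 0 < α ∧ 0 < β ∧
    ∃ (h1 : m * α = p * β) (h2 : n * α = q * β),
      ∀ i j, mkron A α i j = mkron B β (Fin.cast h1 i) (Fin.cast h2 j)

/-- `R^r` is `A`-invariant: `A ⋉_V x ∈ R^r` for every `x ∈ R^r`. -/
def AInvariant {m n : ℕ} (A : Matrix (Fin m) (Fin n) ℝ) (r : ℕ) : Prop :=
  ∀ x : Fin r → ℝ, ∃ y : Fin r → ℝ,
    (⟨_, vprod A x⟩ : Σ k : ℕ, Fin k → ℝ) = ⟨r, y⟩

/-! Kronecker scaling `mkron · s = · ⊗ I_s` is multiplicative, `(M N) ⊗ I_s = (M ⊗ I_s)(N ⊗ I_s)`,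
and composes, `(A ⊗ I_a) ⊗ I_b = A ⊗ I_{ab}`. Hence both `(A ⋉ B) ⋉ C` and `A ⋉ (B ⋉ C)` expand to
a triple product `(A ⊗ I_{s₁})(B ⊗ I_{s₂})(C ⊗ I_{s₃})` with `n s₁ = p s₂` and `q s₂ = u s₃`. Such a
product is determined by `s₂`, and in both expansions `p q s₂ = lcm (n q) (p q) (p u)`. -/

theorem Nat.mod_mul_eq_mod_mul_iff {x y a b : ℕ} :
    x % (b * a) = y % (b * a) ↔ x / b % a = y / b % a ∧ x % b = y % b := by
  refine ⟨fun h => ⟨?_, ?_⟩, fun ⟨h₁, h₂⟩ => by rw [Nat.mod_mul, Nat.mod_mul, h₁, h₂]⟩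
  · rw [← Nat.mod_mul_right_div_self x b a, h, Nat.mod_mul_right_div_self]
  · rw [← Nat.mod_mul_right_mod x b a, h, Nat.mod_mul_right_mod]

def mcast {a b a' b' : ℕ} (ha : a = a') (hb : b = b') (M : Matrix (Fin a) (Fin b) ℝ) :
    Matrix (Fin a') (Fin b') ℝ :=
  M.submatrix (Fin.cast ha.symm) (Fin.cast hb.symm)

theorem mcast_mcast {a b a' b' a'' b'' : ℕ} (ha : a = a') (hb : b = b') (ha' : a' = a'')
    (hb' : b' = b'') (M : Matrix (Fin a) (Fin b) ℝ) :
    mcast ha' hb' (mcast ha hb M) = mcast (ha.trans ha') (hb.trans hb') M :=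
  rfl

theorem mcast_mul_mcast {a b b' c a' b'' c' : ℕ} (ha : a = a') (hb : b = b'') (hb' : b' = b'')
    (hc : c = c') (M : Matrix (Fin a) (Fin b) ℝ) (N : Matrix (Fin b') (Fin c) ℝ) :
    mcast ha hb M * mcast hb' hc N = mcast ha hc (M * mcast (hb'.trans hb.symm) rfl N) := by
  subst ha hb hc hb'
  rfl

theorem mul_mcast {a b b' c c' : ℕ} (hb : b' = b) (hc : c = c')
    (M : Matrix (Fin a) (Fin b) ℝ) (N : Matrix (Fin b') (Fin c) ℝ) :
    M * mcast hb hc N = mcast rfl hc (M * mcast hb rfl N) := by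
  subst hb hc
  rfl

theorem mcast_mul {a a' b c : ℕ} (ha : a = a') (M : Matrix (Fin a) (Fin b) ℝ)
    (N : Matrix (Fin b) (Fin c) ℝ) : mcast ha rfl (M * N) = mcast ha rfl M * N := by
  subst ha
  rfl

theorem sigma_mk_mcast {a b a' b' : ℕ} (ha : a = a') (hb : b = b')
    (M : Matrix (Fin a) (Fin b) ℝ) :
    (⟨a', b', mcast ha hb M⟩ : Σ a b : ℕ, Matrix (Fin a) (Fin b) ℝ) = ⟨a, b, M⟩ := by
  subst ha hb
  rfl

theorem mkron_apply {m n : ℕ} (A : Matrix (Fin m) (Fin n) ℝ) (s : ℕ)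
    (i : Fin (m * s)) (j : Fin (n * s)) :
    mkron A s i j = A i.divNat j.divNat * if (i : ℕ) % s = (j : ℕ) % s then 1 else 0 := by
  simp [mkron, one_apply, Fin.ext_iff]

theorem mkron_mul {a b c : ℕ} (M : Matrix (Fin a) (Fin b) ℝ) (N : Matrix (Fin b) (Fin c) ℝ)
    (s : ℕ) : mkron (M * N) s = mkron M s * mkron N s := by
  simp only [mkron, reindex_apply, submatrix_mul_equiv, ← mul_kronecker_mul, Matrix.one_mul]

theorem mkron_mcast {a b a' b' : ℕ} (ha : a = a') (hb : b = b')
    (M : Matrix (Fin a) (Fin b) ℝ) (s : ℕ) :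
    mkron (mcast ha hb M) s = mcast (by rw [ha]) (by rw [hb]) (mkron M s) := by
  subst ha hb
  rfl

theorem mkron_mkron {m n : ℕ} (A : Matrix (Fin m) (Fin n) ℝ) (a b : ℕ) :
    mkron (mkron A a) b =
      mcast (mul_assoc m a b).symm (mul_assoc n a b).symm (mkron A (a * b)) := by
  have divNat_cast : ∀ {k : ℕ} (x : Fin (k * a * b)),
      (Fin.cast (mul_assoc k a b) x).divNat = x.divNat.divNat := fun x =>
    Fin.ext (by simp [Nat.div_div_eq_div_mul, mul_comm a b])
  ext i j
  simp only [mcast, submatrix_apply, mkron_apply]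
  rw [divNat_cast, divNat_cast]
  simp only [Fin.val_cast, mul_comm a b, Nat.mod_mul_eq_mod_mul_iff, Fin.coe_divNat,
    mul_assoc]
  exact congrArg _ ((ite_zero_mul_ite_zero _ _ _ _).trans (if_congr Iff.rfl (mul_one 1) rfl))

def kronMul {m n p q : ℕ} (A : Matrix (Fin m) (Fin n) ℝ) (B : Matrix (Fin p) (Fin q) ℝ)
    (a b : ℕ) (h : p * b = n * a) : Matrix (Fin (m * a)) (Fin (q * b)) ℝ :=
  mkron A a * mcast h rfl (mkron B b)

theorem stp_eq_kronMul {m n p q : ℕ} (A : Matrix (Fin m) (Fin n) ℝ)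
    (B : Matrix (Fin p) (Fin q) ℝ) :
    stp A B = kronMul A B (Nat.lcm n p / n) (Nat.lcm n p / p)
      ((Nat.mul_div_cancel' (Nat.dvd_lcm_right n p)).trans
        (Nat.mul_div_cancel' (Nat.dvd_lcm_left n p)).symm) :=
  rfl

section Triple

variable {m n p q u v : ℕ} (A : Matrix (Fin m) (Fin n) ℝ) (B : Matrix (Fin p) (Fin q) ℝ)
  (C : Matrix (Fin u) (Fin v) ℝ)

theorem sigma_kronMul_kronMul_left (a b c d : ℕ) (h : p * b = n * a) (h' : u * d = q * b * c) :
    (⟨_, _, kronMul (kronMul A B a b h) C c d h'⟩ : Σ a b : ℕ, Matrix (Fin a) (Fin b) ℝ) =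
      ⟨_, _, kronMul A B (a * c) (b * c) (by rw [← mul_assoc, ← mul_assoc, h]) *
        mcast (h'.trans (mul_assoc q b c)) rfl (mkron C d)⟩ := by
  rw [kronMul, kronMul, mkron_mul, mkron_mcast, mkron_mkron, mkron_mkron, mcast_mcast,
    mcast_mul_mcast, mcast_mul_mcast, sigma_mk_mcast]
  rfl

theorem sigma_kronMul_kronMul_right (a b c d : ℕ) (h : u * b = q * a) (h' : p * a * d = n * c) :
    (⟨_, _, kronMul A (kronMul B C a b h) c d h'⟩ : Σ a b : ℕ, Matrix (Fin a) (Fin b) ℝ) =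
      ⟨_, _, kronMul A B c (a * d) ((mul_assoc p a d).symm.trans h') *
        mcast (show u * (b * d) = q * (a * d) by rw [← mul_assoc, ← mul_assoc, h]) rfl
          (mkron C (b * d))⟩ := by
  rw [kronMul, kronMul, kronMul, mkron_mul, mkron_mcast, mkron_mkron, mkron_mkron, mcast_mcast,
    mcast_mul_mcast, mcast_mcast, mul_mcast, sigma_mk_mcast, mcast_mul, Matrix.mul_assoc]

theorem sigma_kronMul_mul_mkron_congr (hn : 0 < n) (hu : 0 < u) {s₁ s₂ s₃ s₁' s₂' s₃' : ℕ}
    (h₁ : p * s₂ = n * s₁) (h₂ : u * s₃ = q * s₂) (h₁' : p * s₂' = n * s₁')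
    (h₂' : u * s₃' = q * s₂') (hs : s₂ = s₂') :
    (⟨_, _, kronMul A B s₁ s₂ h₁ * mcast h₂ rfl (mkron C s₃)⟩ :
        Σ a b : ℕ, Matrix (Fin a) (Fin b) ℝ) =
      ⟨_, _, kronMul A B s₁' s₂' h₁' * mcast h₂' rfl (mkron C s₃')⟩ := by
  subst hs
  obtain rfl : s₁ = s₁' := Nat.eq_of_mul_eq_mul_left hn (h₁.symm.trans h₁')
  obtain rfl : s₃ = s₃' := Nat.eq_of_mul_eq_mul_left hu (h₂.trans h₂'.symm)
  rfl

end Triple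

theorem lcm_div_mul_lcm_div_comm (n p q u : ℕ) (hp : 0 < p) (hq : 0 < q) :
    Nat.lcm n p / p * (Nat.lcm (q * (Nat.lcm n p / p)) u / (q * (Nat.lcm n p / p))) =
      Nat.lcm q u / q * (Nat.lcm n (p * (Nat.lcm q u / q)) / (p * (Nat.lcm q u / q))) := by
  set b := Nat.lcm n p / p
  set a := Nat.lcm q u / q
  have hb : p * b = Nat.lcm n p := Nat.mul_div_cancel' (Nat.dvd_lcm_right n p)
  have ha : q * a = Nat.lcm q u := Nat.mul_div_cancel' (Nat.dvd_lcm_left q u)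
  have hqb := Nat.mul_div_cancel' (Nat.dvd_lcm_left (q * b) u)
  have hpa := Nat.mul_div_cancel' (Nat.dvd_lcm_right n (p * a))
  refine Nat.eq_of_mul_eq_mul_left (Nat.mul_pos hp hq) ?_
  calc p * q * (b * (Nat.lcm (q * b) u / (q * b)))
      = p * (q * b * (Nat.lcm (q * b) u / (q * b))) := by ring
    _ = Nat.lcm (q * (p * b)) (p * u) := by rw [hqb, ← Nat.lcm_mul_left, mul_left_comm]
    _ = Nat.lcm (q * n) (Nat.lcm (p * q) (p * u)) := by
        rw [hb, ← Nat.lcm_mul_left, Nat.lcm_assoc, mul_comm q p]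
    _ = q * Nat.lcm n (p * a) := by
        rw [Nat.lcm_mul_left, ← ha, mul_left_comm, ← Nat.lcm_mul_left]
    _ = q * (p * a * (Nat.lcm n (p * a) / (p * a))) := by rw [hpa]
    _ = p * q * (a * (Nat.lcm n (p * a) / (p * a))) := by ring

theorem stp_assoc_general {m n p q u v : ℕ} (hn : 0 < n) (hp : 0 < p) (hq : 0 < q) (hu : 0 < u)
    (A : Matrix (Fin m) (Fin n) ℝ) (B : Matrix (Fin p) (Fin q) ℝ)
    (C : Matrix (Fin u) (Fin v) ℝ) :
    (⟨_, _, stp (stp A B) C⟩ : Σ a b : ℕ, Matrix (Fin a) (Fin b) ℝ)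
      = ⟨_, _, stp A (stp B C)⟩ := by
  simp only [stp_eq_kronMul]
  rw [sigma_kronMul_kronMul_left, sigma_kronMul_kronMul_right]
  exact sigma_kronMul_mul_mkron_congr A B C hn hu _ _ _ _ (lcm_div_mul_lcm_div_comm n p q u hp hq)

/-- associativity of the semi-tensor product. -/
theorem stp_assoc {m n p q u v : ℕ} (hm : 0 < m) (hn : 0 < n) (hp : 0 < p)
    (hq : 0 < q) (hu : 0 < u) (hv : 0 < v)
    (A : Matrix (Fin m) (Fin n) ℝ) (B : Matrix (Fin p) (Fin q) ℝ)
    (C : Matrix (Fin u) (Fin v) ℝ) :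
    (⟨_, _, stp (stp A B) C⟩ : Σ a b : ℕ, Matrix (Fin a) (Fin b) ℝ)
      = ⟨_, _, stp A (stp B C)⟩ :=
  stp_assoc_general hn hp hq hu A B C
end
end

section
/- The dimension-free distance d(x,y) := ‖x ⊟ y‖_V on the set of all finite-dimensional real vectors satisfies the triangle inequality: d(x,z) ≤ d(x,y) + d(y,z) for all vectors x, y, z of arbitrary dimensions. -/
open Matrix Kronecker

noncomputable section

/-!
Replicating every entry of a vector `s` times multiplies both `∑ vᵢ²` and the dimension by `s`,
so it does not change `‖v‖_V`. Hence `x`, `y`, `z` may all be replicated into `ℝ^L` for a common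
multiple `L` of their dimensions without changing any of the three distances, and on `ℝ^L` the
distance is the Euclidean one scaled by `1/√L`, for which the triangle inequality is Minkowski's.
-/

theorem sum_vkron {k : ℕ} (v : Fin k → ℝ) (s : ℕ) : ∑ i, vkron v s i = s * ∑ j, v j := by
  rw [← finProdFinEquiv.sum_comp, Fintype.sum_prod_type, Finset.mul_sum]
  simp [vkron]

/-- `v ⊗ 1_{L/k}`, viewed in `ℝ^L`. -/
def expand {k L : ℕ} (h : k ∣ L) (v : Fin k → ℝ) : Fin L → ℝ :=
  vkron v (L / k) ∘ Fin.cast (Nat.mul_div_cancel' h).symm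

theorem vsub2_eq_expand_sub {m n : ℕ} (x : Fin m → ℝ) (y : Fin n → ℝ) :
    vsub2 x y = expand (Nat.dvd_lcm_left m n) x - expand (Nat.dvd_lcm_right m n) y :=
  rfl

theorem expand_sub {k L : ℕ} (h : k ∣ L) (u v : Fin k → ℝ) :
    expand h (u - v) = expand h u - expand h v :=
  rfl

theorem expand_expand {k M L : ℕ} (hkM : k ∣ M) (hML : M ∣ L) (v : Fin k → ℝ) :
    expand hML (expand hkM v) = expand (hkM.trans hML) v := by
  funext i
  simp only [expand, vkron, Function.comp_apply, finProdFinEquiv_symm_apply]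
  congr 1
  ext
  simp only [Fin.coe_divNat, Fin.val_cast, Nat.div_div_eq_div_mul, Nat.div_mul_div hML hkM]

theorem sum_expand {k L : ℕ} (h : k ∣ L) (v : Fin k → ℝ) :
    ∑ i, expand h v i = (L / k : ℕ) * ∑ j, v j := by
  rw [← sum_vkron]
  exact (finCongr (Nat.mul_div_cancel' h).symm).sum_comp (vkron v (L / k))

theorem vnorm_expand {k L : ℕ} (hL : 0 < L) (h : k ∣ L) (v : Fin k → ℝ) :
    vnorm (expand h v) = vnorm v := by
  have hs : (L / k : ℕ) ≠ (0 : ℝ) := by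
    exact_mod_cast (Nat.div_pos (Nat.le_of_dvd hL h) (Nat.pos_of_dvd_of_pos h hL)).ne'
  have hsum : ∑ i, expand h v i ^ 2 = (L / k : ℕ) * ∑ j, v j ^ 2 :=
    sum_expand h fun j => v j ^ 2
  have hLk : (L : ℝ) = (L / k : ℕ) * k := by exact_mod_cast (Nat.div_mul_cancel h).symm
  rw [vnorm, vnorm, hsum, hLk, mul_div_mul_left _ _ hs]

theorem vnorm_eq_norm_div_sqrt {k : ℕ} (v : Fin k → ℝ) :
    vnorm v = ‖WithLp.toLp 2 v‖ / √k := by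
  rw [EuclideanSpace.norm_eq, vnorm, Real.sqrt_div' _ (Nat.cast_nonneg k)]
  simp [sq_abs]

theorem vnorm_add_le {k : ℕ} (u v : Fin k → ℝ) : vnorm (u + v) ≤ vnorm u + vnorm v := by
  simp only [vnorm_eq_norm_div_sqrt, ← add_div, WithLp.toLp_add]
  exact div_le_div_of_nonneg_right (norm_add_le _ _) (Real.sqrt_nonneg _)

theorem vdist_eq_vnorm_expand_sub {m n L : ℕ} (hL : 0 < L) (hm : m ∣ L) (hn : n ∣ L)
    (x : Fin m → ℝ) (y : Fin n → ℝ) :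
    vdist x y = vnorm (expand hm x - expand hn y) := by
  have ht : Nat.lcm m n ∣ L := Nat.lcm_dvd hm hn
  rw [vdist, ← vnorm_expand hL ht, vsub2_eq_expand_sub, expand_sub, expand_expand, expand_expand]

/-- the dimension-free distance satisfies the triangle inequality. -/
theorem vdist_triangle {m n p : ℕ} (hm : 0 < m) (hn : 0 < n) (hp : 0 < p)
    (x : Fin m → ℝ) (y : Fin n → ℝ) (z : Fin p → ℝ) :
    vdist x z ≤ vdist x y + vdist y z := by
  set L := Nat.lcm (Nat.lcm m n) p
  have hL : 0 < L := Nat.lcm_pos (Nat.lcm_pos hm hn) hp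
  have hmL : m ∣ L := (Nat.dvd_lcm_left m n).trans (Nat.dvd_lcm_left _ p)
  have hnL : n ∣ L := (Nat.dvd_lcm_right m n).trans (Nat.dvd_lcm_left _ p)
  have hpL : p ∣ L := Nat.dvd_lcm_right _ p
  rw [vdist_eq_vnorm_expand_sub hL hmL hpL, vdist_eq_vnorm_expand_sub hL hmL hnL,
    vdist_eq_vnorm_expand_sub hL hnL hpL, ← sub_add_sub_cancel _ (expand hnL y)]
  exact vnorm_add_le _ _
end
end

section
/- Let A ∈ M_{k×kμ_x} be dimension-bounded (i.e., its number of rows divides its number of columns). Then A has infinitely many invariant spaces R^r; in particular, if R^r is A-invariant and s ∈ N with gcd(s, kμ_x) = 1, then R^{sr} is also A-invariant. -/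
open Matrix Kronecker

noncomputable section

/-! `A ⋉_V x` has dimension `m · lcm(n, r) / n = m · r / gcd(n, r)`, so for `n, r > 0` the space
`R^r` is `A`-invariant exactly when `gcd(n, r) = m`. Multiplying `r` by `s` coprime to `n` leaves
this gcd unchanged, and `r = m` qualifies whenever `m ∣ n`; the dimensions `(t n + 1) m` then give
infinitely many invariant spaces. -/

theorem Sigma.exists_mk_eq_mk_iff {α : Type*} {β : α → Type*} {a a' : α} (b : β a) :
    (∃ b' : β a', Sigma.mk a b = ⟨a', b'⟩) ↔ a = a' :=
  ⟨fun ⟨_, h⟩ => congrArg Sigma.fst h, fun h => by subst h; exact ⟨b, rfl⟩⟩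

theorem Nat.lcm_div_left_eq_div_gcd {n r : ℕ} (hn : 0 < n) :
    Nat.lcm n r / n = r / Nat.gcd n r := by
  rw [Nat.lcm, Nat.mul_div_assoc _ (Nat.gcd_dvd_right n r), Nat.mul_div_cancel_left _ hn]

theorem Nat.mul_div_gcd_eq_self_iff {n r m : ℕ} (hr : 0 < r) :
    m * (r / Nat.gcd n r) = r ↔ Nat.gcd n r = m := by
  have hg : Nat.gcd n r * (r / Nat.gcd n r) = r := Nat.mul_div_cancel' (Nat.gcd_dvd_right n r)
  have hq : 0 < r / Nat.gcd n r :=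
    Nat.div_pos (Nat.le_of_dvd hr (Nat.gcd_dvd_right n r)) (Nat.gcd_pos_of_pos_right n hr)
  constructor
  · intro h
    exact Nat.eq_of_mul_eq_mul_right hq (hg.trans h.symm)
  · rintro rfl
    exact hg

section AInvariant

variable {m n r : ℕ} (A : Matrix (Fin m) (Fin n) ℝ)

theorem aInvariant_iff_dim_eq : AInvariant A r ↔ m * (Nat.lcm n r / n) = r := by
  simp only [AInvariant, Sigma.exists_mk_eq_mk_iff (β := fun k => Fin k → ℝ), forall_const]

theorem aInvariant_iff_gcd_eq (hn : 0 < n) (hr : 0 < r) : AInvariant A r ↔ Nat.gcd n r = m := by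
  rw [aInvariant_iff_dim_eq, Nat.lcm_div_left_eq_div_gcd hn, Nat.mul_div_gcd_eq_self_iff hr]

theorem aInvariant_self_of_dvd (hn : 0 < n) (hm : 0 < m) (hmn : m ∣ n) : AInvariant A m := by
  rw [aInvariant_iff_gcd_eq A hn hm, Nat.gcd_eq_right hmn]

theorem AInvariant.mul_of_coprime {A : Matrix (Fin m) (Fin n) ℝ} (hn : 0 < n) (hr : 0 < r)
    {s : ℕ} (hs : 0 < s) (hsn : Nat.Coprime s n) (h : AInvariant A r) : AInvariant A (s * r) := by
  rw [aInvariant_iff_gcd_eq A hn (Nat.mul_pos hs hr), Nat.Coprime.gcd_mul_left_cancel_right r hsn]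
  exact (aInvariant_iff_gcd_eq A hn hr).mp h

end AInvariant

/-- a dimension-bounded `A ∈ M_{k×kμ}` has infinitely many invariant
spaces `R^r`; in particular `R^r` invariant and `gcd(s, kμ) = 1` give `R^{sr}`
invariant. -/
theorem ainvariant_infinite {k μ : ℕ} (hk : 0 < k) (hμ : 0 < μ)
    (A : Matrix (Fin k) (Fin (k * μ)) ℝ) :
    {r : ℕ | 0 < r ∧ AInvariant A r}.Infinite ∧
    ∀ r s : ℕ, 0 < r → 0 < s → Nat.gcd s (k * μ) = 1 →
      AInvariant A r → AInvariant A (s * r) := by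
  have hn : 0 < k * μ := Nat.mul_pos hk hμ
  have hk_inv : AInvariant A k := aInvariant_self_of_dvd A hn hk (Nat.dvd_mul_right k μ)
  refine ⟨Set.infinite_of_injective_forall_mem (f := fun t => (t * (k * μ) + 1) * k) ?_
    fun t => ?_, fun r s hr hs hsn => AInvariant.mul_of_coprime hn hr hs hsn⟩
  · intro a b hab
    simpa [hk.ne', hn.ne'] using hab
  · have hcop : Nat.Coprime (t * (k * μ) + 1) (k * μ) :=
      (Nat.coprime_mul_right_add_left 1 (k * μ) t).mpr (Nat.coprime_one_left _)
    exact ⟨Nat.mul_pos (Nat.succ_pos _) hk, hk_inv.mul_of_coprime hn hk (Nat.succ_pos _) hcop⟩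
end
end

section
/- If A ∼ B (matrix equivalence, i.e., A⊗I_α = B⊗I_β for some α, β) with A ∈ M_{m×n} and B ∈ M_{p×q}, then n/m = q/p and the dimension-normalized norms agree: sqrt(n/m)·‖A‖ = sqrt(q/p)·‖B‖, where ‖·‖ is the spectral norm. Consequently ‖·‖_V is well-defined on matrix equivalence classes. -/
open Matrix Kronecker

noncomputable section

/-!
Both sides are invariant under `A ↦ A ⊗ I_s`: the ratio `n / m` trivially, and the spectral norm
because `(A ⊗ I)ᴴ (A ⊗ I) = (Aᴴ A) ⊗ I` has the same spectrum as `Aᴴ A`, as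
`det (λ - X ⊗ I_s) = det (λ - X) ^ s`. Finally `A ⊗ I_α` is a reindexing of `B ⊗ I_β`, and
reindexing `M` only conjugates `Mᴴ M` by a permutation.
-/

theorem div_eq_div_of_mul_eq_mul {G₀ : Type*} [CommGroupWithZero G₀] {a b c d s t : G₀}
    (hs : s ≠ 0) (ht : t ≠ 0) (hac : a * s = c * t) (hbd : b * s = d * t) : a / b = c / d := by
  rw [← mul_div_mul_right a b hs, ← mul_div_mul_right c d ht, hac, hbd]

section Spectrum

variable {R : Type*} [CommRing R] {l m n o κ : Type*} [Fintype l] [Fintype m] [Fintype n]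
  [Fintype o] [Fintype κ] [DecidableEq n] [DecidableEq o] [DecidableEq κ]

theorem spectrum_kronecker_one [Nonempty κ] (X : Matrix n n R) :
    spectrum R (X ⊗ₖ (1 : Matrix κ κ R)) = spectrum R X := by
  ext r
  rw [spectrum.mem_iff, spectrum.mem_iff, not_iff_not]
  have hshift : algebraMap R _ r - X ⊗ₖ (1 : Matrix κ κ R) = (algebraMap R _ r - X) ⊗ₖ 1 := by
    rw [Algebra.algebraMap_eq_smul_one, Algebra.algebraMap_eq_smul_one, ← one_kronecker_one,
      ← smul_kronecker]
    exact (((kroneckerBilinear (R := R) (α := R)).flip 1).map_sub _ _).symm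
  rw [hshift, isUnit_iff_isUnit_det, isUnit_iff_isUnit_det, det_kronecker, det_one, one_pow,
    mul_one, isUnit_pow_iff Fintype.card_ne_zero]

theorem spectrum_submatrix_equiv (X : Matrix n n R) (e : o ≃ n) :
    spectrum R (X.submatrix e e) = spectrum R X := by
  rw [← AlgEquiv.spectrum_eq (reindexAlgEquiv R R e.symm) X]
  rfl

variable [StarRing R]

theorem spectrum_conjTranspose_mul_self_submatrix (M : Matrix m n R) (e : l ≃ m) (f : o ≃ n) :
    spectrum R ((M.submatrix e f)ᴴ * M.submatrix e f) = spectrum R (Mᴴ * M) := by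
  rw [conjTranspose_submatrix, submatrix_mul_equiv, spectrum_submatrix_equiv]

theorem spectrum_conjTranspose_mul_self_kronecker_one [Nonempty κ] (A : Matrix m n R) :
    spectrum R ((A ⊗ₖ (1 : Matrix κ κ R))ᴴ * A ⊗ₖ (1 : Matrix κ κ R)) = spectrum R (Aᴴ * A) := by
  rw [conjTranspose_kronecker, conjTranspose_one, ← mul_kronecker_mul, one_mul,
    spectrum_kronecker_one]

end Spectrum

section SpecNorm

variable {m n : ℕ}

theorem specNorm_eq_sqrt_sSup_spectrum (A : Matrix (Fin m) (Fin n) ℝ) :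
    specNorm A = Real.sqrt (sSup (spectrum ℝ (Aᴴ * A))) := by
  rw [specNorm, (isHermitian_conjTranspose_mul_self A).spectrum_real_eq_range_eigenvalues,
    sSup_range]

theorem specNorm_submatrix_equiv {a b : ℕ} (A : Matrix (Fin m) (Fin n) ℝ) (e : Fin a ≃ Fin m)
    (f : Fin b ≃ Fin n) : specNorm (A.submatrix e f) = specNorm A := by
  rw [specNorm_eq_sqrt_sSup_spectrum, specNorm_eq_sqrt_sSup_spectrum,
    spectrum_conjTranspose_mul_self_submatrix]

theorem specNorm_mkron (A : Matrix (Fin m) (Fin n) ℝ) {s : ℕ} (hs : 0 < s) :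
    specNorm (mkron A s) = specNorm A := by
  have : Nonempty (Fin s) := ⟨⟨0, hs⟩⟩
  rw [specNorm_eq_sqrt_sSup_spectrum, specNorm_eq_sqrt_sSup_spectrum, mkron, reindex_apply,
    spectrum_conjTranspose_mul_self_submatrix, spectrum_conjTranspose_mul_self_kronecker_one]

end SpecNorm

theorem mequiv_norm_general {m n p q : ℕ}
    (A : Matrix (Fin m) (Fin n) ℝ) (B : Matrix (Fin p) (Fin q) ℝ)
    (h : MEquiv A B) :
    (n : ℚ) / m = (q : ℚ) / p ∧
    Real.sqrt ((n : ℝ) / m) * specNorm A = Real.sqrt ((q : ℝ) / p) * specNorm B := by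
  obtain ⟨α, β, hα, hβ, h1, h2, hAB⟩ := h
  have hspec : specNorm A = specNorm B := by
    have hmkron : mkron A α = (mkron B β).submatrix (finCongr h1) (finCongr h2) := Matrix.ext hAB
    rw [← specNorm_mkron A hα, hmkron, specNorm_submatrix_equiv, specNorm_mkron B hβ]
  have hratio (K : Type) [Field K] [CharZero K] : (n : K) / m = q / p :=
    div_eq_div_of_mul_eq_mul (s := (α : K)) (t := β) (Nat.cast_ne_zero.mpr hα.ne')
      (Nat.cast_ne_zero.mpr hβ.ne') (by exact_mod_cast h2) (by exact_mod_cast h1)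
  exact ⟨hratio ℚ, by rw [hratio ℝ, hspec]⟩

/-- matrix equivalence preserves the dimension ratio and the
dimension-normalized spectral norm, so `‖·‖_V` is well defined on equivalence
classes. -/
theorem mequiv_norm {m n p q : ℕ} (hm : 0 < m) (hn : 0 < n) (hp : 0 < p) (hq : 0 < q)
    (A : Matrix (Fin m) (Fin n) ℝ) (B : Matrix (Fin p) (Fin q) ℝ)
    (h : MEquiv A B) :
    (n : ℚ) / m = (q : ℚ) / p ∧
    Real.sqrt ((n : ℝ) / m) * specNorm A = Real.sqrt ((q : ℝ) / p) * specNorm B :=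
  mequiv_norm_general A B h
end
end
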